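/- Let G be an ADMG with observed variables 𝒱, let V' and I be subsets of 𝒱, let {C_i} be the c-components of G_{\overline{I}}, let S = 𝒱 \ (V' ∪ Pa(V') ∪ I), S(i) = S ∩ C_i, and C_i^+ = C_i \ (S(i) ∪ Pa(V') ∪ I). Then for any SCM inducing G with strictly positive distribution, the interventional distribution factorizes as P_{Pa(V')∪I}(V') = ∏_i P_{Pa(C_i^+)∪I}(C_i^+). -/

import Mathlib

open Classical

noncomputable section

/-- An acyclic directed mixed graph (ADMG): directed edges (causal) and
bidirected edges (latent confounders). -/
structure ADMG (V : Type) where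
  dir : V → V → Prop
  bidir : V → V → Prop
  bidir_symm : ∀ a b, bidir a b → bidir b a
  acyclic : ∀ v, ¬ Relation.TransGen dir v v

namespace ADMG

variable {V : Type} [Fintype V] [DecidableEq V]

/-- Observed parents of a set `W`, outside `W`. -/
def parents (G : ADMG V) (W : Set V) : Set V :=
  {v | v ∉ W ∧ ∃ w ∈ W, G.dir v w}

/-- Observed parents of a finite set `W`, outside `W`. -/
def parentsF (G : ADMG V) (W : Finset V) : Finset V :=
  Finset.univ.filter fun v => v ∉ W ∧ ∃ w ∈ W, G.dir v w

/-- Ancestors of a set `W` (including `W` itself). -/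
def ancestors (G : ADMG V) (W : Set V) : Set V :=
  {v | ∃ w ∈ W, Relation.ReflTransGen G.dir v w}

/-- Ancestors of a finite set `W` (including `W` itself). -/
def ancestorsF (G : ADMG V) (W : Finset V) : Finset V :=
  Finset.univ.filter fun v => ∃ w ∈ W, Relation.ReflTransGen G.dir v w

/-- Bidirected connectivity (paths of bidirected edges). -/
def biConn (G : ADMG V) (a b : V) : Prop :=
  Relation.ReflTransGen G.bidir a b

/-- `C` is a c-component of `G`: a maximal bidirected-connected set. -/
def isCComponent (G : ADMG V) (C : Set V) : Prop :=
  C.Nonempty ∧ (∀ a ∈ C, ∀ b ∈ C, G.biConn a b) ∧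
    ∀ a ∈ C, ∀ b, G.biConn a b → b ∈ C

/-- The set of c-components of `G`. -/
def cComponents (G : ADMG V) : Set (Set V) := {C | G.isCComponent C}

/-- The graph after `do(I)`: incoming directed edges into `I` and bidirected
edges incident to `I` are removed. -/
def doGraph (G : ADMG V) (I : Set V) : ADMG V where
  dir a b := G.dir a b ∧ b ∉ I
  bidir a b := G.bidir a b ∧ a ∉ I ∧ b ∉ I
  bidir_symm := fun a b h => ⟨G.bidir_symm a b h.1, h.2.2, h.2.1⟩
  acyclic := fun v h => G.acyclic v (Relation.TransGen.mono (fun _ _ hx => hx.1) _ _ h)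

/-- The graph with all outgoing directed edges of `X` removed. -/
def underGraph (G : ADMG V) (X : Set V) : ADMG V where
  dir a b := G.dir a b ∧ a ∉ X
  bidir := G.bidir
  bidir_symm := G.bidir_symm
  acyclic := fun v h => G.acyclic v (Relation.TransGen.mono (fun _ _ hx => hx.1) _ _ h)

/-- The induced sub-graph on a vertex set `S`. -/
def induced (G : ADMG V) (S : Set V) : ADMG V where
  dir a b := G.dir a b ∧ a ∈ S ∧ b ∈ S
  bidir a b := G.bidir a b ∧ a ∈ S ∧ b ∈ S
  bidir_symm := fun a b h => ⟨G.bidir_symm a b h.1, h.2.2, h.2.1⟩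
  acyclic := fun v h => G.acyclic v (Relation.TransGen.mono (fun _ _ hx => hx.1) _ _ h)

/-- Adjacency in the mixed graph. -/
def adjacent (G : ADMG V) (a b : V) : Prop := G.dir a b ∨ G.dir b a ∨ G.bidir a b

/-- The edge between `a` and `b` points into `b`. -/
def intoEdge (G : ADMG V) (a b : V) : Prop := G.dir a b ∨ G.bidir a b

/-- `b` is a collider on the consecutive triple `a, b, c`. -/
def isCollider (G : ADMG V) (a b c : V) : Prop := G.intoEdge a b ∧ G.intoEdge c b

/-- A walk (list of vertices) that is active given the conditioning set `Z`:
non-colliders avoid `Z`, colliders have a descendant in `Z`. -/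
def ActiveWalk (G : ADMG V) (Z : Set V) (p : List V) : Prop :=
  p.Chain' G.adjacent ∧
    ∀ i a b c, p[i]? = some a → p[i + 1]? = some b → p[i + 2]? = some c →
      (G.isCollider a b c → ∃ z ∈ Z, Relation.ReflTransGen G.dir b z) ∧
      (¬ G.isCollider a b c → b ∉ Z)

/-- d-connection of `X` and `Y` given `Z` in the mixed graph (m-connection). -/
def dConnected (G : ADMG V) (X Y Z : Set V) : Prop :=
  ∃ p : List V, G.ActiveWalk Z p ∧
    (∃ x ∈ X, p.head? = some x) ∧ ∃ y ∈ Y, p.getLast? = some y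

/-- d-separation of `X` and `Y` given `Z`. -/
def dSeparated (G : ADMG V) (X Y Z : Set V) : Prop := ¬ G.dConnected X Y Z

end ADMG

/-- A (semi-Markovian) structural causal model over the ADMG `G`, with observed
variables valued in `Val`: independent finite latents `L`, mechanisms `f`
reading only observed parents and own latents (shared latents forcing a
bidirected edge), and the solution map of the structural equations under an
intervention. -/
structure SCM (V : Type) (Val : Type) [Fintype V] [DecidableEq V] [Fintype Val]
    (G : ADMG V) where
  L : Type
  [fintL : Fintype L]
  [decL : DecidableEq L]
  NVal : Type
  [fintN : Fintype NVal]
  ν : L → NVal → ℝ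
  ν_nonneg : ∀ l x, 0 ≤ ν l x
  ν_sum : ∀ l, ∑ x, ν l x = 1
  reads : V → L → Prop
  semiMarkov : ∀ v w l, v ≠ w → reads v l → reads w l → G.bidir v w
  f : V → (V → Val) → (L → NVal) → Val
  f_parents : ∀ v x y ω, (∀ p, G.dir p v → x p = y p) → f v x ω = f v y ω
  f_latents : ∀ v x ω ω', (∀ l, reads v l → ω l = ω' l) → f v x ω = f v x ω'
  solve : Finset V → (V → Val) → (L → NVal) → V → Val
  solve_spec : ∀ I x ω v,
    solve I x ω v = if v ∈ I then x v else f v (solve I x ω) ω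

namespace SCM

attribute [instance] SCM.fintL SCM.decL SCM.fintN

variable {V Val : Type} [Fintype V] [DecidableEq V] [Fintype Val] {G : ADMG V}

/-- Probability of a full latent configuration (latents are independent). -/
def μ (M : SCM V Val G) (ω : M.L → M.NVal) : ℝ := ∏ l, M.ν l (ω l)

/-- The interventional distribution `P(y | do(I := x))` (observational for `I = ∅`). -/
def P (M : SCM V Val G) (I : Finset V) (x : V → Val) (y : V → Val) : ℝ :=
  ∑ ω : M.L → M.NVal, if M.solve I x ω = y then M.μ ω else 0

/-- The marginal interventional distribution `P(S = y|_S | do(I := x))`. -/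
def Pm (M : SCM V Val G) (I : Finset V) (x : V → Val) (S : Finset V) (y : V → Val) : ℝ :=
  ∑ z : V → Val, if ∀ v ∈ S, z v = y v then M.P I x z else 0

/-- The conditional distribution `P(S = y|_S | C = y|_C, do(I := x))`. -/
def cond (M : SCM V Val G) (I : Finset V) (x : V → Val) (S C : Finset V)
    (y : V → Val) : ℝ :=
  M.Pm I x (S ∪ C) y / M.Pm I x C y

/-- Strict positivity of the induced observational distribution. -/
def positive (M : SCM V Val G) : Prop := ∀ x y, 0 < M.P ∅ x y

end SCM

end

/-! Under `do(Pa(W) ∪ I := y)`, acyclicity turns the event `W = y` into the event that each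
mechanism `f v` with `v ∈ W \ I`, fed the values `y`, returns `y v`; this event depends only on
the latents read by `W \ I`. The set `V' \ I` is the disjoint union of the `C_i^+`, and two
vertices outside `I` reading a common latent are joined by a bidirected edge of `G_{do(I)}`, hence
lie in the same c-component. So the events for different `C_i^+` depend on disjoint blocks of
independent latents, and the probability of their intersection is the product of theirs. -/

open Finset

section IndependentCoordinates

variable {L N : Type*} [Fintype L] [DecidableEq L] [Fintype N]

noncomputable def piExpect (ν : L → N → ℝ) (f : (L → N) → ℝ) : ℝ :=
  ∑ ω, (∏ l, ν l (ω l)) * f ω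

theorem sum_prod_eq_one {ν : L → N → ℝ} (hν : ∀ l, ∑ x, ν l x = 1) :
    ∑ ω : L → N, ∏ l, ν l (ω l) = 1 := by
  rw [← Fintype.prod_sum]
  simp [hν]

variable {ν : L → N → ℝ}

theorem piExpect_mul_of_dependsOn_compl (hν : ∀ l, ∑ x, ν l x = 1) {f g : (L → N) → ℝ}
    {A : Set L} (hf : DependsOn f A) (hg : DependsOn g Aᶜ) :
    piExpect ν (fun ω => f ω * g ω) = piExpect ν f * piExpect ν g := by
  let e := (Equiv.piEquivPiSubtypeProd (· ∈ A) fun _ => N).symm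
  let μA : ({l // l ∈ A} → N) → ℝ := fun u => ∏ l, ν l.1 (u l)
  let μB : ({l // l ∉ A} → N) → ℝ := fun w => ∏ l, ν l.1 (w l)
  have heA : ∀ u w (l : {l // l ∈ A}), e (u, w) l = u l := fun u w l => by simp [e, l.2]
  have heB : ∀ u w (l : {l // l ∉ A}), e (u, w) l = w l := fun u w l => by simp [e, l.2]
  have hsplit : ∀ h : (L → N) → ℝ,
      piExpect ν h = ∑ u, ∑ w, μA u * μB w * h (e (u, w)) := by
    intro h
    rw [piExpect, ← e.sum_comp, Fintype.sum_prod_type]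
    refine sum_congr rfl fun u _ => sum_congr rfl fun w _ => ?_
    rw [← Fintype.prod_subtype_mul_prod_subtype (· ∈ A)]
    simp only [heA, heB, μA, μB]
  have hμA : ∑ u, μA u = 1 := sum_prod_eq_one fun l => hν l
  have hμB : ∑ w, μB w = 1 := sum_prod_eq_one fun l => hν l
  obtain ⟨u₀⟩ : Nonempty ({l // l ∈ A} → N) := by
    by_contra h
    simp [not_nonempty_iff.mp h] at hμA
  obtain ⟨w₀⟩ : Nonempty ({l // l ∉ A} → N) := by
    by_contra h
    simp [not_nonempty_iff.mp h] at hμB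
  have hf' : ∀ u w, f (e (u, w)) = f (e (u, w₀)) := fun u w =>
    hf fun l hl => (heA u w ⟨l, hl⟩).trans (heA u w₀ ⟨l, hl⟩).symm
  have hg' : ∀ u w, g (e (u, w)) = g (e (u₀, w)) := fun u w =>
    hg fun l hl => (heB u w ⟨l, hl⟩).trans (heB u₀ w ⟨l, hl⟩).symm
  simp only [hsplit, hf', hg']
  have hfA : ∑ u, ∑ w, μA u * μB w * f (e (u, w₀)) = ∑ u, μA u * f (e (u, w₀)) := by
    simp only [← sum_mul, ← mul_sum, hμB, mul_one]
  have hgB : ∑ u, ∑ w, μA u * μB w * g (e (u₀, w)) = ∑ w, μB w * g (e (u₀, w)) := by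
    simp only [mul_assoc, ← mul_sum, ← sum_mul, hμA, one_mul]
  rw [hfA, hgB, sum_mul_sum]
  exact sum_congr rfl fun u _ => sum_congr rfl fun w _ => by ring

theorem piExpect_prod_of_pairwiseDisjoint (hν : ∀ l, ∑ x, ν l x = 1) {ι : Type*}
    [DecidableEq ι] (s : Finset ι) {g : ι → (L → N) → ℝ} {A : ι → Set L}
    (hA : (s : Set ι).PairwiseDisjoint A) (hg : ∀ i ∈ s, DependsOn (g i) (A i)) :
    piExpect ν (fun ω => ∏ i ∈ s, g i ω) = ∏ i ∈ s, piExpect ν (g i) := by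
  induction s using Finset.induction_on with
  | empty => simpa [piExpect] using sum_prod_eq_one hν
  | insert j s hj ih =>
    rw [coe_insert, Set.pairwiseDisjoint_insert_of_notMem (by simpa using hj)] at hA
    have hrest : DependsOn (fun ω => ∏ i ∈ s, g i ω) (A j)ᶜ := fun x y hxy =>
      prod_congr rfl fun i hi => hg i (mem_insert_of_mem hi) fun l hl =>
        hxy l (Set.disjoint_right.mp (hA.2 i hi) hl)
    simp only [prod_insert hj]
    rw [piExpect_mul_of_dependsOn_compl hν (hg j (mem_insert_self j s)) hrest,
      ih hA.1 fun i hi => hg i (mem_insert_of_mem hi)]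

end IndependentCoordinates

namespace ADMG

variable {V : Type} [Fintype V]

theorem mem_parentsF [DecidableEq V] {G : ADMG V} {W : Finset V} {v : V} :
    v ∈ G.parentsF W ↔ v ∉ W ∧ ∃ w ∈ W, G.dir v w := by
  simp [parentsF]

theorem wellFounded_dir (G : ADMG V) : WellFounded G.dir :=
  haveI : IsTrans V (Relation.TransGen G.dir) := ⟨fun _ _ _ => Relation.TransGen.trans⟩
  haveI : Std.Irrefl (Relation.TransGen G.dir) := ⟨G.acyclic⟩
  Subrelation.wf (fun h => Relation.TransGen.single h) (Finite.wellFounded_of_trans_of_irrefl _)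

end ADMG

namespace SCM

variable {V Val : Type} [Fintype V] [DecidableEq V] [Fintype Val] {G : ADMG V}
  (M : SCM V Val G)

theorem solve_of_mem {J : Finset V} {v : V} (x : V → Val) (ω : M.L → M.NVal) (hv : v ∈ J) :
    M.solve J x ω v = x v := by
  rw [M.solve_spec, if_pos hv]

theorem Pm_eq_sum (J : Finset V) (x : V → Val) (W : Finset V) (y : V → Val) :
    M.Pm J x W y = ∑ ω, if ∀ v ∈ W, M.solve J x ω v = y v then M.μ ω else 0 := by
  rw [Pm, ← sum_filter]
  simp only [P]
  rw [sum_comm]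
  refine sum_congr rfl fun ω _ => ?_
  rw [sum_ite_eq]
  simp only [mem_filter, mem_univ, true_and]

theorem solve_eq_on_iff {J W : Finset V} (hJ : G.parentsF W ⊆ J) (y : V → Val)
    (ω : M.L → M.NVal) :
    (∀ v ∈ W, M.solve J y ω v = y v) ↔ ∀ v ∈ W \ J, M.f v y ω = y v := by
  have hf : ∀ v ∈ W, (∀ p ∈ W, G.dir p v → M.solve J y ω p = y p) →
      M.f v (M.solve J y ω) ω = M.f v y ω := fun v hv hW =>
    M.f_parents v _ _ ω fun p hp => by
      by_cases hpW : p ∈ W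
      · exact hW p hpW hp
      · exact M.solve_of_mem y ω (hJ (ADMG.mem_parentsF.mpr ⟨hpW, v, hv, hp⟩))
  constructor
  · intro h v hv
    obtain ⟨hvW, hvJ⟩ := mem_sdiff.mp hv
    rw [← hf v hvW fun p hp _ => h p hp, ← h v hvW, M.solve_spec J y ω v, if_neg hvJ]
  · intro h v
    induction v using (G.wellFounded_dir).induction with
    | _ v ih =>
      intro hv
      by_cases hvJ : v ∈ J
      · exact M.solve_of_mem y ω hvJ
      · rw [M.solve_spec, if_neg hvJ, hf v hv fun p hp hpv => ih p hpv hp]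
        exact h v (mem_sdiff.mpr ⟨hv, hvJ⟩)

theorem Pm_eq_piExpect {J W : Finset V} (hJ : G.parentsF W ⊆ J) (y : V → Val) :
    M.Pm J y W y = piExpect M.ν fun ω => ∏ v ∈ W \ J, if M.f v y ω = y v then 1 else 0 := by
  rw [Pm_eq_sum]
  refine sum_congr rfl fun ω _ => ?_
  simp only [prod_boole, M.solve_eq_on_iff hJ]
  split_ifs <;> simp [μ]

theorem Pm_parentsF_union_eq_piExpect (W I : Finset V) (y : V → Val) :
    M.Pm (G.parentsF W ∪ I) y W y =
      piExpect M.ν fun ω => ∏ v ∈ W \ I, if M.f v y ω = y v then 1 else 0 := by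
  rw [M.Pm_eq_piExpect subset_union_left]
  congr! 3 with ω
  ext v
  simp only [mem_sdiff, mem_union, ADMG.mem_parentsF]
  tauto

theorem dependsOn_prod_indicator (W : Finset V) (y : V → Val) :
    DependsOn (fun ω => ∏ v ∈ W, if M.f v y ω = y v then (1 : ℝ) else 0)
      {l | ∃ v ∈ W, M.reads v l} := fun ω ω' h =>
  prod_congr rfl fun v hv => by rw [M.f_latents v y ω ω' fun l hl => h l ⟨v, hv, hl⟩]

theorem biConn_doGraph_of_reads {I : Set V} {v w : V} {l : M.L} (hv : v ∉ I) (hw : w ∉ I)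
    (hvl : M.reads v l) (hwl : M.reads w l) : (G.doGraph I).biConn v w := by
  by_cases hvw : v = w
  · exact hvw ▸ Relation.ReflTransGen.refl
  · exact .single ⟨M.semiMarkov v w l hvw hvl hwl, hv, hw⟩

open Function in
theorem pairwise_disjoint_reads {ι : Type*} {I : Set V} {C W : ι → Set V}
    (hcc : ∀ i, (G.doGraph I).isCComponent (C i)) (hdisj : Pairwise (Disjoint on C))
    (hW : ∀ i, W i ⊆ C i \ I) :
    Pairwise (Disjoint on fun i => {l | ∃ v ∈ W i, M.reads v l}) := by
  intro i j hij
  refine Set.disjoint_left.mpr ?_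
  rintro l ⟨v, hv, hvl⟩ ⟨w, hw, hwl⟩
  obtain ⟨hvC, hvI⟩ := hW i hv
  obtain ⟨hwC, hwI⟩ := hW j hw
  exact Set.disjoint_left.mp (hdisj hij)
    ((hcc i).2.2 v hvC w (M.biConn_doGraph_of_reads hvI hwI hvl hwl)) hwC

end SCM

theorem subgraph_c_factorization_general
    {V Val : Type} [Fintype V] [DecidableEq V] [Fintype Val]
    (G : ADMG V) (V' I : Finset V) {n : ℕ} (C : Fin n → Finset V)
    (hcc : ∀ i, (G.doGraph ↑I).isCComponent ↑(C i))
    (hdisj : ∀ i j, i ≠ j → Disjoint (C i) (C j))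
    (hcover : ∀ v : V, ∃ i, v ∈ C i)
    (M : SCM V Val G) (y : V → Val) :
    M.Pm (G.parentsF V' ∪ I) y V' y =
      ∏ i : Fin n,
        M.Pm
          (G.parentsF
              (C i \ (((Finset.univ \ (V' ∪ G.parentsF V' ∪ I)) ∩ C i) ∪ G.parentsF V' ∪ I))
            ∪ I)
          y
          (C i \ (((Finset.univ \ (V' ∪ G.parentsF V' ∪ I)) ∩ C i) ∪ G.parentsF V' ∪ I))
          y := by
  set W : Fin n → Finset V :=
    fun i => C i \ (((univ \ (V' ∪ G.parentsF V' ∪ I)) ∩ C i) ∪ G.parentsF V' ∪ I) with hWdef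
  change _ = ∏ i, M.Pm (G.parentsF (W i) ∪ I) y (W i) y
  have hW : ∀ i v, v ∈ W i ↔ v ∈ C i ∧ v ∈ V' ∧ v ∉ I := by
    intro i v
    simp only [hWdef, mem_sdiff, mem_union, mem_inter, mem_univ, true_and, ADMG.mem_parentsF]
    generalize (∃ w ∈ V', G.dir v w) = P
    tauto
  have hWI : ∀ i, W i \ I = W i := fun i =>
    sdiff_eq_self_of_disjoint (disjoint_left.mpr fun v hv => ((hW i v).mp hv).2.2)
  have hunion : V' \ I = univ.biUnion W := by
    ext v
    simp only [mem_sdiff, mem_biUnion, mem_univ, true_and, hW]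
    obtain ⟨i, hi⟩ := hcover v
    exact ⟨fun h => ⟨i, hi, h⟩, fun ⟨_, _, h⟩ => h⟩
  have hWdisj : Set.PairwiseDisjoint ↑(univ : Finset (Fin n)) W := fun i _ j _ hij =>
    disjoint_left.mpr fun v hvi hvj =>
      disjoint_left.mp (hdisj i j hij) ((hW i v).mp hvi).1 ((hW j v).mp hvj).1
  have hreads := M.pairwise_disjoint_reads (C := fun i => ↑(C i)) (W := fun i => ↑(W i)) hcc
    (fun i j hij => disjoint_coe.mpr (hdisj i j hij))
    (fun i v hv => ⟨((hW i v).mp hv).1, ((hW i v).mp hv).2.2⟩)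
  simp only [SCM.Pm_parentsF_union_eq_piExpect, hWI, hunion, prod_biUnion hWdisj]
  exact piExpect_prod_of_pairwiseDisjoint M.ν_sum univ (hreads.set_pairwise _)
    fun i _ => M.dependsOn_prod_indicator (W i) y

/-- Tian's factorization for a sub-graph under intervention:
`P_{Pa(V') ∪ I}(V') = ∏_i P_{Pa(C_i^+) ∪ I}(C_i^+)` where `C_i` are the
c-components of `G_{do(I)}`, `S = 𝒱 \ (V' ∪ Pa(V') ∪ I)`, `S(i) = S ∩ C_i`,
and `C_i^+ = C_i \ (S(i) ∪ Pa(V') ∪ I)`. -/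
theorem subgraph_c_factorization
    {V Val : Type} [Fintype V] [DecidableEq V] [Fintype Val]
    (G : ADMG V) (V' I : Finset V) {n : ℕ} (C : Fin n → Finset V)
    (hcc : ∀ i, (G.doGraph ↑I).isCComponent ↑(C i))
    (hdisj : ∀ i j, i ≠ j → Disjoint (C i) (C j))
    (hcover : ∀ v : V, ∃ i, v ∈ C i)
    (M : SCM V Val G) (hpos : M.positive) (y : V → Val) :
    M.Pm (G.parentsF V' ∪ I) y V' y =
      ∏ i : Fin n,
        M.Pm
          (G.parentsF
              (C i \ (((Finset.univ \ (V' ∪ G.parentsF V' ∪ I)) ∩ C i) ∪ G.parentsF V' ∪ I))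
            ∪ I)
          y
          (C i \ (((Finset.univ \ (V' ∪ G.parentsF V' ∪ I)) ∩ C i) ∪ G.parentsF V' ∪ I))
          y :=
  subgraph_c_factorization_general G V' I C hcc hdisj hcover M y
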